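/- arXiv:2308.02241 — 2 statements merged into one kernel-verified Lean document; each statement's English description precedes it below -/
import Mathlib

section
/- Let Z be a standard normal random variable, a > 0, b ≥ 0. Then E[Z·sin(bZ)/(a²+Z²)] = −√(2π)·e^{a²/2}·(sinh(ab) + (1/2)(e^{−ab}Φ(a−b) − e^{ab}Φ(a+b))). -/
open MeasureTheory ProbabilityTheory Real

/-- Standard normal cumulative distribution function. -/
noncomputable def stdNormalCDF (x : ℝ) : ℝ :=
  ∫ u in Set.Iic x, Real.exp (-u ^ 2 / 2) / Real.sqrt (2 * Real.pi)

/-!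
Write `z / (a² + z²)` as the Laplace transform `∫₀^∞ e^{-at} sin (z t) dt` and swap the two
integrals, which is legitimate because the integrand is bounded by `e^{-at}`. The characteristic
function of the standard normal law gives
`E[sin (bZ) sin (tZ)] = (e^{-(b-t)²/2} - e^{-(b+t)²/2}) / 2`, and after completing the square each
of the two remaining `t`-integrals is a Gaussian tail integral, i.e. a multiple of `1 - Φ`.
-/

open Set
open scoped NNReal

theorem integral_exp_neg_mul_mul_sin_Ioi {a : ℝ} (ha : 0 < a) (z : ℝ) :
    ∫ t in Ioi (0 : ℝ), Real.exp (-a * t) * Real.sin (z * t) = z / (a ^ 2 + z ^ 2) := by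
  have hre : (-a + z * Complex.I).re < 0 := by simpa using ha
  have him : ∀ t : ℝ, Real.exp (-a * t) * Real.sin (z * t) =
      (Complex.exp ((-a + z * Complex.I) * t)).im := by
    intro t
    rw [Complex.exp_im]
    simp
  have h := integral_im (integrableOn_exp_mul_complex_Ioi hre 0)
  simp only [RCLike.im_to_complex] at h
  simp_rw [him, h, integral_exp_mul_complex_Ioi hre 0]
  simp [Complex.div_im, Complex.normSq_apply]
  field_simp

theorem integral_mul_sin_div_sq_add_sq {a : ℝ} (ha : 0 < a) (b : ℝ) (μ : Measure ℝ)
    [IsFiniteMeasure μ] :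
    ∫ z, z * Real.sin (b * z) / (a ^ 2 + z ^ 2) ∂μ =
      ∫ t in Ioi (0 : ℝ), Real.exp (-a * t) * ∫ z, Real.sin (b * z) * Real.sin (t * z) ∂μ := by
  set F : ℝ → ℝ → ℝ := fun z t ↦ Real.exp (-a * t) * (Real.sin (b * z) * Real.sin (t * z))
  have hF : Integrable (Function.uncurry F) (μ.prod (volume.restrict (Ioi 0))) := by
    refine ((integrable_const (1 : ℝ)).mul_prod
      (integrableOn_exp_mul_Ioi (neg_neg_of_pos ha) 0)).mono' (by fun_prop) (ae_of_all _ fun p ↦ ?_)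
    simp only [F, Function.uncurry, norm_mul, Real.norm_eq_abs, abs_exp, one_mul]
    exact mul_le_of_le_one_right (exp_pos _).le
      (mul_le_one₀ (abs_sin_le_one _) (abs_nonneg _) (abs_sin_le_one _))
  have hF_eq (z t : ℝ) : F z t = Real.sin (b * z) * (Real.exp (-a * t) * Real.sin (z * t)) := by
    simp only [F]
    rw [mul_comm t]
    ring
  have hlaplace (z : ℝ) : ∫ t in Ioi (0 : ℝ), F z t = z * Real.sin (b * z) / (a ^ 2 + z ^ 2) := by
    simp_rw [hF_eq]
    rw [integral_const_mul, integral_exp_neg_mul_mul_sin_Ioi ha]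
    ring
  simp_rw [← hlaplace]
  rw [integral_integral_swap hF]
  simp_rw [F, integral_const_mul]

theorem integral_cos_mul_gaussianReal (v : ℝ≥0) (c : ℝ) :
    ∫ z, Real.cos (c * z) ∂gaussianReal 0 v = Real.exp (-(v * c ^ 2 / 2)) := by
  have hint : Integrable (fun z : ℝ ↦ Complex.exp (c * z * Complex.I)) (gaussianReal 0 v) :=
    Integrable.of_bound (by fun_prop) 1 (ae_of_all _ fun z ↦ by
      rw [← Complex.ofReal_mul, Complex.norm_exp_ofReal_mul_I])
  have h := congrArg Complex.re (charFun_gaussianReal (μ := 0) (v := v) c)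
  rw [charFun_apply_real, ← RCLike.re_to_complex, ← integral_re hint] at h
  convert h using 1
  · simp [← Complex.ofReal_mul, Complex.exp_ofReal_mul_I_re]
  · rw [← Complex.exp_ofReal_re]
    push_cast
    ring_nf

theorem integral_sin_mul_sin_gaussianReal (v : ℝ≥0) (s t : ℝ) :
    ∫ z, Real.sin (s * z) * Real.sin (t * z) ∂gaussianReal 0 v =
      (Real.exp (-(v * (s - t) ^ 2 / 2)) - Real.exp (-(v * (s + t) ^ 2 / 2))) / 2 := by
  have hcos (c : ℝ) : Integrable (fun z ↦ Real.cos (c * z)) (gaussianReal 0 v) :=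
    Integrable.of_bound (by fun_prop) 1 (ae_of_all _ fun z ↦ by simpa using abs_cos_le_one _)
  have hprod (z : ℝ) : Real.sin (s * z) * Real.sin (t * z) =
      (Real.cos ((s - t) * z) - Real.cos ((s + t) * z)) / 2 := by
    rw [sub_mul, add_mul, cos_sub, cos_add]
    ring
  simp_rw [hprod]
  rw [integral_div, integral_sub (hcos _) (hcos _), integral_cos_mul_gaussianReal,
    integral_cos_mul_gaussianReal]

theorem integral_comp_sub_right_Ioi {E : Type*} [NormedAddCommGroup E] [NormedSpace ℝ E]
    (f : ℝ → E) (c d : ℝ) : ∫ t in Ioi d, f (t - c) = ∫ u in Ioi (d - c), f u := by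
  have h := (measurePreserving_sub_right volume c).setIntegral_preimage_emb
    (measurableEmbedding_subRight c) f (Ioi (d - c))
  rwa [preimage_sub_const_Ioi, sub_add_cancel] at h

theorem integrable_exp_neg_sq_div_two : Integrable fun u : ℝ ↦ Real.exp (-u ^ 2 / 2) := by
  simpa [neg_div, div_eq_inv_mul] using integrable_exp_neg_mul_sq (b := 1 / 2) (by norm_num)

theorem integral_exp_neg_sq_div_two : ∫ u : ℝ, Real.exp (-u ^ 2 / 2) = √(2 * π) := by
  simpa [neg_div, div_eq_inv_mul, mul_comm] using integral_gaussian (1 / 2)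

theorem integral_Iic_exp_neg_sq_div_two (x : ℝ) :
    ∫ u in Iic x, Real.exp (-u ^ 2 / 2) = √(2 * π) * stdNormalCDF x := by
  rw [stdNormalCDF, integral_div, mul_div_cancel₀ _ (by positivity)]

theorem integral_Ioi_exp_neg_sq_sub_div_two (m : ℝ) :
    ∫ t in Ioi (0 : ℝ), Real.exp (-(t - m) ^ 2 / 2) = √(2 * π) * (1 - stdNormalCDF (-m)) := by
  have h := intervalIntegral.integral_Iic_add_Ioi (b := -m)
    integrable_exp_neg_sq_div_two.integrableOn integrable_exp_neg_sq_div_two.integrableOn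
  rw [integral_exp_neg_sq_div_two, integral_Iic_exp_neg_sq_div_two] at h
  rw [integral_comp_sub_right_Ioi (fun u ↦ Real.exp (-u ^ 2 / 2)), zero_sub]
  linear_combination h

theorem exp_neg_mul_mul_exp_neg_sq_sub (a c t : ℝ) :
    Real.exp (-a * t) * Real.exp (-(t - c) ^ 2 / 2) =
      Real.exp (a ^ 2 / 2 - a * c) * Real.exp (-(t - (c - a)) ^ 2 / 2) := by
  rw [← Real.exp_add, ← Real.exp_add]
  ring_nf

theorem integrable_exp_neg_mul_mul_exp_neg_sq_sub (a c : ℝ) :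
    Integrable fun t ↦ Real.exp (-a * t) * Real.exp (-(t - c) ^ 2 / 2) := by
  simp_rw [exp_neg_mul_mul_exp_neg_sq_sub a c]
  exact (integrable_exp_neg_sq_div_two.comp_sub_right (c - a)).const_mul _

theorem integral_Ioi_exp_neg_mul_mul_exp_neg_sq_sub (a c : ℝ) :
    ∫ t in Ioi (0 : ℝ), Real.exp (-a * t) * Real.exp (-(t - c) ^ 2 / 2) =
      √(2 * π) * Real.exp (a ^ 2 / 2 - a * c) * (1 - stdNormalCDF (a - c)) := by
  simp_rw [exp_neg_mul_mul_exp_neg_sq_sub a c]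
  rw [integral_const_mul, integral_Ioi_exp_neg_sq_sub_div_two, neg_sub]
  ring

theorem normal_expectation_sin_general (a b : ℝ) (ha : 0 < a) :
    ∫ z, z * Real.sin (b * z) / (a ^ 2 + z ^ 2) ∂(gaussianReal 0 1) =
      -(Real.sqrt (2 * Real.pi) * Real.exp (a ^ 2 / 2) *
        (Real.sinh (a * b) +
          (1 / 2) * (Real.exp (-(a * b)) * stdNormalCDF (a - b) -
            Real.exp (a * b) * stdNormalCDF (a + b)))) := by
  have hsplit (t : ℝ) : Real.exp (-a * t) *
      ((Real.exp (-((1 : ℝ≥0) * (b - t) ^ 2 / 2)) -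
        Real.exp (-((1 : ℝ≥0) * (b + t) ^ 2 / 2))) / 2) =
      (Real.exp (-a * t) * Real.exp (-(t - b) ^ 2 / 2) -
        Real.exp (-a * t) * Real.exp (-(t - -b) ^ 2 / 2)) / 2 := by
    rw [NNReal.coe_one, one_mul, one_mul, ← neg_sq (b - t), neg_sub, sub_neg_eq_add, add_comm b,
      neg_div, neg_div, mul_div_assoc', mul_sub]
  rw [integral_mul_sin_div_sq_add_sq ha]
  simp_rw [integral_sin_mul_sin_gaussianReal, hsplit]
  rw [integral_div, integral_sub (integrable_exp_neg_mul_mul_exp_neg_sq_sub a b).integrableOn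
    (integrable_exp_neg_mul_mul_exp_neg_sq_sub a (-b)).integrableOn,
    integral_Ioi_exp_neg_mul_mul_exp_neg_sq_sub, integral_Ioi_exp_neg_mul_mul_exp_neg_sq_sub,
    mul_neg, sub_neg_eq_add, sub_neg_eq_add, Real.exp_sub, Real.exp_add, Real.sinh_eq,
    Real.exp_neg]
  field_simp
  ring

theorem normal_expectation_sin (a b : ℝ) (ha : 0 < a) (hb : 0 ≤ b) :
    ∫ z, z * Real.sin (b * z) / (a ^ 2 + z ^ 2) ∂(gaussianReal 0 1) =
      -(Real.sqrt (2 * Real.pi) * Real.exp (a ^ 2 / 2) *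
        (Real.sinh (a * b) +
          (1 / 2) * (Real.exp (-(a * b)) * stdNormalCDF (a - b) -
            Real.exp (a * b) * stdNormalCDF (a + b)))) :=
  normal_expectation_sin_general a b ha
end

section
/- Let F : ℝᵈ → ℝᵈ be locally Lipschitz and Y an ℝᵈ-valued random variable such that F(Y) has a locally bounded density with respect to Lebesgue measure. Then Y has a locally bounded density. -/
/-!
If `F` is `K`-Lipschitz on a ball `B` and `ρ ≤ M` on `F(B)`, then every `s ⊆ B` satisfies
`P(Y ∈ s) ≤ P(F(Y) ∈ F(s)) ≤ M · vol(F(s)) ≤ M · K^d · vol(s)`, since a `K`-Lipschitz map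
multiplies `d`-dimensional Hausdorff measure, which is Lebesgue measure, by at most `K^d`.
So the law of `Y` is absolutely continuous and its Radon–Nikodym derivative is a.e. at most
`M · K^d` on `B`; modifying it on a null set makes these bounds hold everywhere, simultaneously
for all balls of integer radius.
-/

open Set
open scoped ENNReal NNReal

namespace MeasureTheory

section

variable {α : Type*} [MeasurableSpace α] {μ ν : Measure α}

theorem Measure.absolutelyContinuous_of_forall_le_mul {ι : Type*} [Countable ι]
    {U : ι → Set α} (hU : ⋃ i, U i = univ) {C : ι → ℝ≥0∞}
    (h : ∀ i, ∀ s ⊆ U i, μ s ≤ C i * ν s) : μ ≪ ν := by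
  refine AbsolutelyContinuous.mk fun s _ hs => measure_mono_null (t := ⋃ i, s ∩ U i)
    (by rw [← inter_iUnion, hU, inter_univ]) (measure_iUnion_null fun i => ?_)
  exact le_antisymm ((h i _ inter_subset_right).trans (by
    rw [measure_mono_null inter_subset_left hs, mul_zero])) bot_le

theorem Measure.ae_rnDeriv_le_of_forall_le_mul [SigmaFinite ν] {U : Set α} (hU : MeasurableSet U)
    {C : ℝ≥0∞} (h : ∀ s ⊆ U, μ s ≤ C * ν s) : ∀ᵐ x ∂ν, x ∈ U → μ.rnDeriv ν x ≤ C := by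
  rw [← ae_restrict_iff' hU]
  refine ae_le_of_forall_setLIntegral_le_of_sigmaFinite (measurable_rnDeriv μ ν)
    fun s hs _ => ?_
  calc ∫⁻ x in s, μ.rnDeriv ν x ∂ν.restrict U = ∫⁻ x in s ∩ U, μ.rnDeriv ν x ∂ν := by
        rw [restrict_restrict hs]
    _ ≤ μ (s ∩ U) := setLIntegral_rnDeriv_le _
    _ ≤ C * ν (s ∩ U) := h _ inter_subset_right
    _ = ∫⁻ _ in s, C ∂ν.restrict U := by rw [setLIntegral_const, restrict_apply hs]

theorem exists_ae_eq_forall_le_of_forall_ae_le {ι : Type*} [Countable ι] {f : α → ℝ≥0∞}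
    {U : ι → Set α} {C : ι → ℝ≥0∞} (h : ∀ i, ∀ᵐ x ∂ν, x ∈ U i → f x ≤ C i) :
    ∃ g, g =ᵐ[ν] f ∧ ∀ i, ∀ x ∈ U i, g x ≤ C i := by
  let good := {x | ∀ i, x ∈ U i → f x ≤ C i}
  refine ⟨good.indicator f, ?_, fun i x hx => ?_⟩
  · filter_upwards [ae_all_iff.2 h] with x hx
    exact indicator_of_mem (show x ∈ good from hx) f
  · by_cases hgood : x ∈ good
    · rw [indicator_of_mem hgood]; exact hgood i hx
    · rw [indicator_of_notMem hgood]; exact bot_le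

theorem Measure.exists_withDensity_eq_forall_le_of_forall_le_mul [SigmaFinite μ] [SigmaFinite ν]
    {ι : Type*} [Countable ι] {U : ι → Set α} (hUm : ∀ i, MeasurableSet (U i))
    (hU : ⋃ i, U i = univ) {C : ι → ℝ≥0∞} (h : ∀ i, ∀ s ⊆ U i, μ s ≤ C i * ν s) :
    ∃ g, μ = ν.withDensity g ∧ ∀ i, ∀ x ∈ U i, g x ≤ C i := by
  obtain ⟨g, hg, hgC⟩ := exists_ae_eq_forall_le_of_forall_ae_le
    fun i => ae_rnDeriv_le_of_forall_le_mul (hUm i) (h i)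
  refine ⟨g, ?_, hgC⟩
  rw [withDensity_congr_ae hg,
    withDensity_rnDeriv_eq μ ν (absolutelyContinuous_of_forall_le_mul hU h)]

theorem withDensity_apply_le_mul_of_forall_le [SFinite μ] {ρ : α → ℝ≥0∞} {t : Set α} {M : ℝ≥0∞}
    (h : ∀ x ∈ t, ρ x ≤ M) : μ.withDensity ρ t ≤ M * μ t := by
  rw [withDensity_apply', ← setLIntegral_const]
  exact setLIntegral_mono measurable_const h

end

end MeasureTheory

open MeasureTheory

theorem LipschitzOnWith.volume_image_le {ι : Type*} [Fintype ι] {F : (ι → ℝ) → ι → ℝ} {K : ℝ≥0}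
    {s : Set (ι → ℝ)} (hF : LipschitzOnWith K F s) :
    volume (F '' s) ≤ (K : ℝ≥0∞) ^ Fintype.card ι * volume s := by
  simpa only [hausdorffMeasure_pi_real, ENNReal.rpow_natCast] using
    hF.hausdorffMeasure_image_le (d := Fintype.card ι) (Nat.cast_nonneg _)

theorem measure_le_mul_volume_of_map_eq_withDensity {ι : Type*} [Fintype ι] {μ : Measure (ι → ℝ)}
    {F : (ι → ℝ) → ι → ℝ} (hF : AEMeasurable F μ) {ρ : (ι → ℝ) → ℝ≥0∞}
    (hμ : μ.map F = volume.withDensity ρ) {s : Set (ι → ℝ)} {K : ℝ≥0} (hK : LipschitzOnWith K F s)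
    {M : ℝ≥0∞} (hM : ∀ y ∈ F '' s, ρ y ≤ M) :
    μ s ≤ M * (K : ℝ≥0∞) ^ Fintype.card ι * volume s :=
  calc μ s ≤ μ.map F (F '' s) := Measure.le_map_apply_image hF s
    _ ≤ M * volume (F '' s) := hμ ▸ withDensity_apply_le_mul_of_forall_le hM
    _ ≤ M * ((K : ℝ≥0∞) ^ Fintype.card ι * volume s) := by gcongr; exact hK.volume_image_le
    _ = M * (K : ℝ≥0∞) ^ Fintype.card ι * volume s := (mul_assoc ..).symm

theorem density_transfer_locally_lipschitz_general {Ω : Type*} [MeasureSpace Ω] (P : Measure Ω)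
    [IsProbabilityMeasure P] (d : ℕ)
    (Y : Ω → (Fin d → ℝ)) (hY : Measurable Y)
    (F : (Fin d → ℝ) → (Fin d → ℝ))
    (hF : ∀ s : Set (Fin d → ℝ), Bornology.IsBounded s →
      ∃ K : NNReal, LipschitzOnWith K F s)
    (ρ : (Fin d → ℝ) → ENNReal)
    (hdens : Measure.map (fun ω => F (Y ω)) P = volume.withDensity ρ)
    (hloc : ∀ K : Set (Fin d → ℝ), IsCompact K →
      ∃ M : ENNReal, M < ⊤ ∧ ∀ y ∈ K, ρ y ≤ M) :
    ∃ ρY : (Fin d → ℝ) → ENNReal,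
      Measure.map Y P = volume.withDensity ρY ∧
      ∀ K : Set (Fin d → ℝ), IsCompact K →
        ∃ M : ENNReal, M < ⊤ ∧ ∀ y ∈ K, ρY y ≤ M := by
  have hFc : Continuous F := LocallyLipschitz.continuous fun x =>
    let ⟨K, hK⟩ := hF _ (Metric.isBounded_ball (x := x) (r := 1))
    ⟨K, _, Metric.ball_mem_nhds x one_pos, hK⟩
  have hdom : ∀ n : ℕ, ∃ C < ∞, ∀ s ⊆ Metric.closedBall (0 : Fin d → ℝ) n,
      P.map Y s ≤ C * volume s := by
    intro n
    obtain ⟨K, hK⟩ := hF _ (Metric.isBounded_closedBall (x := 0) (r := n))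
    obtain ⟨M, hM, hρM⟩ := hloc _ ((isCompact_closedBall 0 n).image hFc)
    refine ⟨M * (K : ℝ≥0∞) ^ d, by finiteness, fun s hs => ?_⟩
    have hmap : (P.map Y).map F = volume.withDensity ρ := by
      rwa [Measure.map_map hFc.measurable hY]
    simpa only [Fintype.card_fin] using measure_le_mul_volume_of_map_eq_withDensity
      hFc.measurable.aemeasurable hmap (hK.mono hs) fun y hy => hρM y (image_mono hs hy)
  choose C hC_lt hC using hdom
  have : IsProbabilityMeasure (P.map Y) := Measure.isProbabilityMeasure_map hY.aemeasurable
  obtain ⟨ρY, hρY, hρYC⟩ := (P.map Y).exists_withDensity_eq_forall_le_of_forall_le_mul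
    (fun n => measurableSet_closedBall) (Metric.iUnion_closedBall_nat 0) hC
  refine ⟨ρY, hρY, fun K hK => ?_⟩
  obtain ⟨R, hR⟩ := hK.isBounded.subset_closedBall 0
  obtain ⟨n, hn⟩ := exists_nat_ge R
  exact ⟨C n, hC_lt n, fun y hy => hρYC n y (Metric.closedBall_subset_closedBall hn (hR hy))⟩

theorem density_transfer_locally_lipschitz {Ω : Type*} [MeasureSpace Ω] (P : Measure Ω)
    [IsProbabilityMeasure P] (d : ℕ) (hd : 0 < d)
    (Y : Ω → (Fin d → ℝ)) (hY : Measurable Y)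
    (F : (Fin d → ℝ) → (Fin d → ℝ))
    (hF : ∀ s : Set (Fin d → ℝ), Bornology.IsBounded s →
      ∃ K : NNReal, LipschitzOnWith K F s)
    (ρ : (Fin d → ℝ) → ENNReal) (hmeas : Measurable ρ)
    (hdens : Measure.map (fun ω => F (Y ω)) P = volume.withDensity ρ)
    (hloc : ∀ K : Set (Fin d → ℝ), IsCompact K →
      ∃ M : ENNReal, M < ⊤ ∧ ∀ y ∈ K, ρ y ≤ M) :
    ∃ ρY : (Fin d → ℝ) → ENNReal,
      Measure.map Y P = volume.withDensity ρY ∧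
      ∀ K : Set (Fin d → ℝ), IsCompact K →
        ∃ M : ENNReal, M < ⊤ ∧ ∀ y ∈ K, ρY y ≤ M :=
  density_transfer_locally_lipschitz_general P d Y hY F hF ρ hdens hloc
end
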